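/- Let (x_i^{0,N})_i ∈ ℝ^{dN}, (m_i^{0,N})_i ∈ ℝ^N, let ψ_i^{(N)} : (ℝ^d)^N × ℝ^N → ℝ and let φ be Lipschitz such that the system d/dt x_i = (1/N) Σ_{j=1}^N m_j φ(x_j − x_i), d/dt m_i = ψ_i^{(N)}(x,m) with this initial condition admits a unique solution (x^N, m^N). If x_k^{0,N} = x_l^{0,N} for some pair of indices (k,l), then x_k^N(t) = x_l^N(t) for all t ≥ 0. -/

import Mathlib

open MeasureTheory Set Filter Topology
open scoped NNReal ENNReal

noncomputable section

abbrev Euc (d : ℕ) := EuclideanSpace ℝ (Fin d)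

/-- `(x, m)` solves, for all `t ≥ 0`, the system
`d/dt x_i = (1/N) Σ_j m_j a(‖x_i − x_j‖)(x_j − x_i)`, `d/dt m_i = ψ_i^{(N)}(x, m)`. -/
def Sol6 {d N : ℕ} (a : ℝ → ℝ)
    (ψi : Fin N → (Fin N → Euc d) → (Fin N → ℝ) → ℝ)
    (x : ℝ → Fin N → Euc d) (m : ℝ → Fin N → ℝ) : Prop :=
  ∀ t ∈ Set.Ici (0:ℝ), ∀ i : Fin N,
    HasDerivWithinAt (fun τ => x τ i)
      ((N : ℝ)⁻¹ • ∑ j : Fin N, (m t j * a ‖x t i - x t j‖) • (x t j - x t i))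
      (Set.Ici 0) t ∧
    HasDerivWithinAt (fun τ => m τ i) (ψi i (x t) (m t)) (Set.Ici 0) t

/-!
Both `x_k` and `x_l` solve the same non-autonomous ODE `y' = Σ_j (m_j(t) / N) φ(x_j(t) - y)`, in
which the other agents' trajectories are frozen as given functions of time. Its right-hand side is
Lipschitz in `y` with constant `K Σ_j |m_j(t)| / N`, which is bounded on every compact time
interval because the weights are continuous. Grönwall uniqueness then forces the two trajectories,
equal at `t = 0`, to coincide.
-/
theorem LipschitzWith.sum_smul_comp_sub {E F ι : Type*} [NormedAddCommGroup E]
    [NormedAddCommGroup F] [NormedSpace ℝ F] [Fintype ι] {φ : E → F} {K : ℝ≥0}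
    (hφ : LipschitzWith K φ) (c : ι → ℝ) (p : ι → E) :
    LipschitzWith (K * ∑ j, ‖c j‖₊) fun y => ∑ j, c j • φ (p j - y) := by
  refine LipschitzWith.of_dist_le_mul fun y y' => ?_
  calc dist (∑ j, c j • φ (p j - y)) (∑ j, c j • φ (p j - y'))
      ≤ ∑ j, dist (c j • φ (p j - y)) (c j • φ (p j - y')) := dist_sum_sum_le _ _ _
    _ = ∑ j, ‖c j‖ * dist (φ (p j - y)) (φ (p j - y')) := by simp only [dist_smul₀]
    _ ≤ ∑ j, ‖c j‖ * (K * dist y y') := by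
        gcongr with j
        simpa only [dist_sub_left] using hφ.dist_le_mul (p j - y) (p j - y')
    _ = (K * ∑ j, ‖c j‖₊ : ℝ≥0) * dist y y' := by
        simp only [NNReal.coe_mul, NNReal.coe_sum, coe_nnnorm, Finset.mul_sum, Finset.sum_mul]
        exact Finset.sum_congr rfl fun j _ => by ring

theorem IsCompact.exists_forall_sum_nnnorm_le {X ι : Type*} [TopologicalSpace X] [Fintype ι]
    {s : Set X} (hs : IsCompact s) {c : X → ι → ℝ} (hc : ∀ j, ContinuousOn (fun t => c t j) s) :
    ∃ C : ℝ≥0, ∀ t ∈ s, ∑ j, ‖c t j‖₊ ≤ C := by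
  obtain ⟨C, hC⟩ := hs.exists_bound_of_continuousOn
    (continuousOn_finsetSum Finset.univ fun j _ => (hc j).norm)
  refine ⟨C.toNNReal, fun t ht => ?_⟩
  rw [← NNReal.coe_le_coe, NNReal.coe_sum, Real.coe_toNNReal']
  exact ((le_abs_self _).trans (hC t ht)).trans (le_max_left _ _)

theorem eqOn_of_hasDerivWithinAt_sum_smul_comp_sub {E ι : Type*} [NormedAddCommGroup E]
    [NormedSpace ℝ E] [Fintype ι] {φ : E → E} {K : ℝ≥0} (hφ : LipschitzWith K φ)
    {c : ℝ → ι → ℝ} {p : ℝ → ι → E} {f g : ℝ → E} {a b : ℝ}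
    (hc : ∀ j, ContinuousOn (fun t => c t j) (Icc a b))
    (hf : ContinuousOn f (Icc a b))
    (hf' : ∀ t ∈ Ico a b, HasDerivWithinAt f (∑ j, c t j • φ (p t j - f t)) (Ici t) t)
    (hg : ContinuousOn g (Icc a b))
    (hg' : ∀ t ∈ Ico a b, HasDerivWithinAt g (∑ j, c t j • φ (p t j - g t)) (Ici t) t)
    (ha : f a = g a) :
    EqOn f g (Icc a b) := by
  obtain ⟨C, hC⟩ := isCompact_Icc.exists_forall_sum_nnnorm_le hc
  have hv : ∀ t ∈ Ico a b,
      LipschitzOnWith (K * C) (fun y => ∑ j, c t j • φ (p t j - y)) univ := fun t ht =>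
    ((hφ.sum_smul_comp_sub (c t) (p t)).weaken
      (mul_le_mul_right (hC t (Ico_subset_Icc_self ht)) K)).lipschitzOnWith
  exact ODE_solution_unique_of_mem_Icc_right hv hf hf' (fun _ _ => trivial) hg hg'
    (fun _ _ => trivial) ha

theorem Sol6.hasDerivWithinAt_opinion {d N : ℕ} {a : ℝ → ℝ}
    {ψi : Fin N → (Fin N → Euc d) → (Fin N → ℝ) → ℝ}
    {x : ℝ → Fin N → Euc d} {m : ℝ → Fin N → ℝ} (hsol : Sol6 a ψi x m)
    {t : ℝ} (ht : 0 ≤ t) (i : Fin N) :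
    HasDerivWithinAt (fun τ => x τ i)
      (∑ j, ((N : ℝ)⁻¹ * m t j) • (fun v : Euc d => a ‖v‖ • v) (x t j - x t i)) (Ici t) t := by
  have hvel : ∑ j, ((N : ℝ)⁻¹ * m t j) • (fun v : Euc d => a ‖v‖ • v) (x t j - x t i) =
      (N : ℝ)⁻¹ • ∑ j, (m t j * a ‖x t i - x t j‖) • (x t j - x t i) := by
    simp only [Finset.smul_sum, mul_smul, norm_sub_rev (x t i)]
  rw [hvel]
  exact (hsol t ht i).1.mono (Ici_subset_Ici.2 ht)

theorem Sol6.continuousOn_opinion {d N : ℕ} {a : ℝ → ℝ}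
    {ψi : Fin N → (Fin N → Euc d) → (Fin N → ℝ) → ℝ}
    {x : ℝ → Fin N → Euc d} {m : ℝ → Fin N → ℝ} (hsol : Sol6 a ψi x m) (i : Fin N) :
    ContinuousOn (fun τ => x τ i) (Ici 0) := fun t ht =>
  (hsol t ht i).1.continuousWithinAt

theorem Sol6.continuousOn_weight {d N : ℕ} {a : ℝ → ℝ}
    {ψi : Fin N → (Fin N → Euc d) → (Fin N → ℝ) → ℝ}
    {x : ℝ → Fin N → Euc d} {m : ℝ → Fin N → ℝ} (hsol : Sol6 a ψi x m) (j : Fin N) :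
    ContinuousOn (fun τ => m τ j) (Ici 0) := fun t ht =>
  (hsol t ht j).2.continuousWithinAt

theorem stmt6_general {d N : ℕ}
    (a : ℝ → ℝ)
    (hφlip : ∃ K : ℝ≥0, LipschitzWith K (fun v : Euc d => a ‖v‖ • v))
    (ψi : Fin N → (Fin N → Euc d) → (Fin N → ℝ) → ℝ)
    (xinit : Fin N → Euc d)
    (x : ℝ → Fin N → Euc d) (m : ℝ → Fin N → ℝ)
    (hsol : Sol6 a ψi x m) (hx0 : x 0 = xinit)
    (k l : Fin N) (hkl : xinit k = xinit l) :
    ∀ t ∈ Set.Ici (0:ℝ), x t k = x t l := by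
  obtain ⟨K, hK⟩ := hφlip
  intro T hT
  have hIcc : Icc 0 T ⊆ Ici (0 : ℝ) := Icc_subset_Ici_self
  exact eqOn_of_hasDerivWithinAt_sum_smul_comp_sub hK
    (fun j => ((hsol.continuousOn_weight j).mono hIcc).const_smul (N : ℝ)⁻¹)
    ((hsol.continuousOn_opinion k).mono hIcc) (fun t ht => hsol.hasDerivWithinAt_opinion ht.1 k)
    ((hsol.continuousOn_opinion l).mono hIcc) (fun t ht => hsol.hasDerivWithinAt_opinion ht.1 l)
    (by rw [hx0, hkl]) ⟨hT, le_rfl⟩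

/-- if two agents start at the same opinion, they share the same opinion
for all times (for the unique solution of the system). -/
theorem stmt6 {d N : ℕ} (hN : 0 < N)
    (a : ℝ → ℝ) (ha : Continuous a)
    (hφlip : ∃ K : ℝ≥0, LipschitzWith K (fun v : Euc d => a ‖v‖ • v))
    (ψi : Fin N → (Fin N → Euc d) → (Fin N → ℝ) → ℝ)
    (xinit : Fin N → Euc d) (minit : Fin N → ℝ)
    (x : ℝ → Fin N → Euc d) (m : ℝ → Fin N → ℝ)
    (hsol : Sol6 a ψi x m) (hx0 : x 0 = xinit) (hm0 : m 0 = minit)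
    (huniq : ∀ (x' : ℝ → Fin N → Euc d) (m' : ℝ → Fin N → ℝ),
      Sol6 a ψi x' m' → x' 0 = xinit → m' 0 = minit →
        ∀ t ∈ Set.Ici (0:ℝ), x' t = x t ∧ m' t = m t)
    (k l : Fin N) (hkl : xinit k = xinit l) :
    ∀ t ∈ Set.Ici (0:ℝ), x t k = x t l :=
  stmt6_general a hφlip ψi xinit x m hsol hx0 k l hkl
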